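/- Let G_1, …, G_N be finite simple graphs on Fin n, let P be an entrywise positive row-stochastic N×N matrix, let π ∈ ℝ^N be a stationary distribution of P (π entrywise positive, Σ_j π_j = 1, and Σ_i π_i p_{ij} = π_j for all j), and let s > 0. Then ρ(C) < 1, and the expected DSSD state m(k) := Σ_{σ : {0,…,k−1} → {1,…,N}} w(σ)·x_σ(k) converges, as k → ∞, to μ := Σ_{i=1}^N q^{(i)}, where q = (q^{(1)}, …, q^{(N)}) := (I − C)^{-1} ψ ∈ ℝ^{Nn}. -/

import Mathlib

open Matrix Filter Topology Kronecker
open scoped ENNReal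

/-- `J(G)` : the matrix with entries `A(G)_{ij} / (d_G(i) + 1)`. -/
noncomputable def Jmat {n : ℕ} (G : SimpleGraph (Fin n)) [DecidableRel G.Adj] :
    Matrix (Fin n) (Fin n) ℝ :=
  Matrix.of fun i j => (if G.Adj i j then 1 else 0) / ((G.degree i : ℝ) + 1)

/-- Spectral radius of a real square matrix: max modulus of its complex eigenvalues. -/
noncomputable def specRad {m : Type*} [Fintype m] [DecidableEq m] (M : Matrix m m ℝ) : ℝ≥0∞ :=
  spectralRadius ℂ (M.map (algebraMap ℝ ℂ))

/-- Block-diagonal matrix with blocks `Js 1, …, Js N`, with rows/columns indexed by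
pairs `(i, u)`, `(i, u)` being coordinate `u` of block `i`. -/
def blkDiag {N : ℕ} {m : Type*} [DecidableEq m] (Js : Fin N → Matrix m m ℝ) :
    Matrix (Fin N × m) (Fin N × m) ℝ :=
  (Matrix.blockDiagonal Js).submatrix Prod.swap Prod.swap

/-- `C := (Pᵀ ⊗ I_n) · blockdiag(J(G_1), …, J(G_N))`. -/
noncomputable def Cmat {N n : ℕ} (Gs : Fin N → SimpleGraph (Fin n))
    [∀ i, DecidableRel (Gs i).Adj] (P : Matrix (Fin N) (Fin N) ℝ) :
    Matrix (Fin N × Fin n) (Fin N × Fin n) ℝ :=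
  (P.transpose ⊗ₖ (1 : Matrix (Fin n) (Fin n) ℝ)) * blkDiag (fun i => Jmat (Gs i))

/-- `ψ ∈ ℝ^{Nn}` defined blockwise by `ψ^{(j)} = (∑_i p_{ij} π_i s / (d_{G_i}(0)+1)) e_0`. -/
noncomputable def psiVec {N n : ℕ} [NeZero n] (Gs : Fin N → SimpleGraph (Fin n))
    [∀ i, DecidableRel (Gs i).Adj] (P : Matrix (Fin N) (Fin N) ℝ)
    (pi : Fin N → ℝ) (s : ℝ) : Fin N × Fin n → ℝ :=
  fun p => if p.2 = 0 then ∑ i, P i p.1 * pi i * s / (((Gs i).degree 0 : ℝ) + 1) else 0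

/-- The DSSD trajectory along a graph sequence `σ`:
`x_σ(0) = 0`, `x_σ(t+1) = J(G_{σ(t)}) x_σ(t) + (s/(d_{G_{σ(t)}}(0)+1)) e_0`. -/
noncomputable def traj {N n : ℕ} [NeZero n] (Gs : Fin N → SimpleGraph (Fin n))
    [∀ i, DecidableRel (Gs i).Adj] (s : ℝ) (σ : ℕ → Fin N) : ℕ → Fin n → ℝ
  | 0 => 0
  | (t + 1) => fun u =>
      (Jmat (Gs (σ t))).mulVec (traj Gs s σ t) u +
        (if u = 0 then s / (((Gs (σ t)).degree 0 : ℝ) + 1) else 0)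

/-- The probability weight of the length-`k` graph sequence `σ`:
`w(σ) = π_{σ(0)} · ∏_{t=0}^{k-2} p_{σ(t) σ(t+1)}`. -/
noncomputable def weight {N : ℕ} (P : Matrix (Fin N) (Fin N) ℝ) (pi : Fin N → ℝ)
    (k : ℕ) (σ : ℕ → Fin N) : ℝ :=
  pi (σ 0) * ∏ t ∈ Finset.range (k - 1), P (σ t) (σ (t + 1))

/-- Extension of a finite sequence `σ : Fin k → Fin N` to all of `ℕ`
(the values beyond `k` are irrelevant). -/
def extFun {N : ℕ} [NeZero N] {k : ℕ} (σ : Fin k → Fin N) : ℕ → Fin N :=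
  fun t => if h : t < k then σ ⟨t, h⟩ else 0

/-- The expected DSSD state `m(k) := ∑_{σ : {0,…,k−1} → {1,…,N}} w(σ) · x_σ(k)`. -/
noncomputable def expState {N n : ℕ} [NeZero N] [NeZero n]
    (Gs : Fin N → SimpleGraph (Fin n)) [∀ i, DecidableRel (Gs i).Adj]
    (P : Matrix (Fin N) (Fin N) ℝ) (pi : Fin N → ℝ) (s : ℝ) (k : ℕ) : Fin n → ℝ :=
  ∑ σ : Fin k → Fin N, weight P pi k (extFun σ) • traj Gs s (extFun σ) k
set_option linter.unusedSectionVars false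
section Aux
variable {N n : ℕ} [NeZero N] [NeZero n]

lemma Cmat_apply (Gs : Fin N → SimpleGraph (Fin n)) [∀ i, DecidableRel (Gs i).Adj]
    (P : Matrix (Fin N) (Fin N) ℝ) (p q : Fin N × Fin n) :
    Cmat Gs P p q = P q.1 p.1 * Jmat (Gs q.1) p.2 q.2 := by
  simp only [Cmat, Matrix.mul_apply, Matrix.kroneckerMap_apply, blkDiag, Matrix.submatrix_apply,
    Prod.swap, Matrix.blockDiagonal_apply, Matrix.transpose_apply, Matrix.one_apply]
  rw [Fintype.sum_prod_type]
  simp [Finset.sum_ite_eq, Finset.mul_sum, mul_ite, ite_and]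

lemma Jmat_nonneg (G : SimpleGraph (Fin n)) [DecidableRel G.Adj] (u v : Fin n) :
    0 ≤ Jmat G u v := by
  unfold Jmat
  simp only [Matrix.of_apply]
  positivity

lemma Jmat_rowsum (G : SimpleGraph (Fin n)) [DecidableRel G.Adj] (u : Fin n) :
    ∑ v, Jmat G u v = (G.degree u : ℝ) / ((G.degree u : ℝ) + 1) := by
  unfold Jmat
  simp only [Matrix.of_apply]
  rw [← Finset.sum_div]
  congr 1
  rw [Finset.sum_boole, ← SimpleGraph.neighborFinset_eq_filter, SimpleGraph.degree]

lemma Jmat_rowsum_le (G : SimpleGraph (Fin n)) [DecidableRel G.Adj] (u : Fin n) :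
    ∑ v, Jmat G u v ≤ 1 - (n : ℝ)⁻¹ := by
  rw [Jmat_rowsum]
  have hd : (G.degree u : ℝ) + 1 ≤ n := by
    have := G.degree_lt_card_verts u
    rw [Fintype.card_fin] at this
    exact_mod_cast this
  have hpos : (0:ℝ) < (G.degree u : ℝ) + 1 := by positivity
  have hn : (0:ℝ) < n := lt_of_lt_of_le hpos hd
  have h2 : (G.degree u : ℝ) / ((G.degree u : ℝ) + 1) = 1 - ((G.degree u : ℝ) + 1)⁻¹ := by
    field_simp
    ring
  rw [h2, sub_le_sub_iff_left]
  exact inv_anti₀ hpos hd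
end Aux

variable {N n : ℕ} [NeZero N] [NeZero n]
variable (Gs : Fin N → SimpleGraph (Fin n)) [∀ i, DecidableRel (Gs i).Adj]
variable (P : Matrix (Fin N) (Fin N) ℝ) (pi : Fin N → ℝ)

lemma Cmat_nonneg (hP0 : ∀ i j, 0 ≤ P i j) (p q : Fin N × Fin n) :
    0 ≤ Cmat Gs P p q := by
  rw [Cmat_apply]
  exact mul_nonneg (hP0 _ _) (Jmat_nonneg _ _ _)

lemma r_nonneg : (0:ℝ) ≤ 1 - (n : ℝ)⁻¹ := by
  have : (1:ℝ) ≤ n := by exact_mod_cast Nat.one_le_iff_ne_zero.mpr (NeZero.ne n)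
  have : (n:ℝ)⁻¹ ≤ 1 := by
    rw [inv_le_one_iff₀]; right; exact this
  linarith

lemma r_lt_one : (1 - (n : ℝ)⁻¹ : ℝ) < 1 := by
  have : (0:ℝ) < n := by exact_mod_cast Nat.pos_of_ne_zero (NeZero.ne n)
  have : (0:ℝ) < (n:ℝ)⁻¹ := by positivity
  linarith

lemma Cmat_weighted (hP0 : ∀ i j, 0 ≤ P i j) (hpipos : ∀ i, 0 < pi i)
    (hstat : ∀ j, ∑ i, pi i * P i j = pi j) (p : Fin N × Fin n) :
    ∑ q, Cmat Gs P p q * pi q.1 ≤ (1 - (n : ℝ)⁻¹) * pi p.1 := by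
  calc ∑ q, Cmat Gs P p q * pi q.1
      = ∑ j, ∑ v, P j p.1 * Jmat (Gs j) p.2 v * pi j := by
        rw [Fintype.sum_prod_type]
        exact Finset.sum_congr rfl fun j _ => Finset.sum_congr rfl fun v _ => by
          rw [Cmat_apply]
    _ = ∑ j, P j p.1 * pi j * ∑ v, Jmat (Gs j) p.2 v := by
        exact Finset.sum_congr rfl fun j _ => by
          rw [Finset.mul_sum]
          exact Finset.sum_congr rfl fun v _ => by ring
    _ ≤ ∑ j, P j p.1 * pi j * (1 - (n : ℝ)⁻¹) := by
        refine Finset.sum_le_sum fun j _ => ?_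
        exact mul_le_mul_of_nonneg_left (Jmat_rowsum_le _ _)
          (mul_nonneg (hP0 _ _) (hpipos j).le)
    _ = (1 - (n : ℝ)⁻¹) * ∑ j, pi j * P j p.1 := by
        rw [Finset.mul_sum]
        exact Finset.sum_congr rfl fun j _ => by ring
    _ = (1 - (n : ℝ)⁻¹) * pi p.1 := by rw [hstat]

lemma eig_norm_le (hP0 : ∀ i j, 0 ≤ P i j) (hpipos : ∀ i, 0 < pi i)
    (hstat : ∀ j, ∑ i, pi i * P i j = pi j) {lam : ℂ} {v : Fin N × Fin n → ℂ}
    (hv : v ≠ 0)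
    (heig : ((Cmat Gs P).map (algebraMap ℝ ℂ)).mulVec v = lam • v) :
    ‖lam‖ ≤ 1 - (n : ℝ)⁻¹ := by
  obtain ⟨p, -, hp⟩ := Finset.exists_max_image Finset.univ
    (fun q => ‖v q‖ / pi q.1) Finset.univ_nonempty
  have hvp : 0 < ‖v p‖ := by
    rcases lt_or_eq_of_le (norm_nonneg (v p)) with h | h
    · exact h
    · exfalso
      apply hv
      funext q
      have h1 := hp q (Finset.mem_univ q)
      rw [← h, zero_div] at h1
      have := (div_nonpos_iff.mp h1)
      have hq : ‖v q‖ ≤ 0 := by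
        rcases this with ⟨h2, h3⟩ | ⟨h2, h3⟩
        · exact absurd h3 (not_le.mpr (hpipos q.1))
        · exact h2
      simp only [Pi.zero_apply]
      exact norm_eq_zero.mp (le_antisymm hq (norm_nonneg _))
  have hbound : ∀ q, ‖v q‖ ≤ ‖v p‖ / pi p.1 * pi q.1 := fun q => by
    have h1 := hp q (Finset.mem_univ q)
    rw [div_le_div_iff₀ (hpipos q.1) (hpipos p.1)] at h1
    rw [div_mul_eq_mul_div, le_div_iff₀ (hpipos p.1)]
    linarith
  have key : ‖lam‖ * ‖v p‖ ≤ (1 - (n : ℝ)⁻¹) * ‖v p‖ := by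
    have h0 := congrFun heig p
    simp only [Pi.smul_apply, smul_eq_mul] at h0
    calc ‖lam‖ * ‖v p‖ = ‖lam * v p‖ := (norm_mul _ _).symm
      _ = ‖(((Cmat Gs P).map (algebraMap ℝ ℂ)).mulVec v) p‖ := by rw [h0]
      _ = ‖∑ q, (algebraMap ℝ ℂ) (Cmat Gs P p q) * v q‖ := by
          simp [Matrix.mulVec, dotProduct, Matrix.map_apply]
      _ ≤ ∑ q, ‖(algebraMap ℝ ℂ) (Cmat Gs P p q) * v q‖ := norm_sum_le _ _
      _ = ∑ q, Cmat Gs P p q * ‖v q‖ := by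
          refine Finset.sum_congr rfl fun q _ => ?_
          rw [norm_mul]
          congr 1
          rw [show (algebraMap ℝ ℂ) (Cmat Gs P p q) = ((Cmat Gs P p q : ℝ) : ℂ) from rfl,
            Complex.norm_real, Real.norm_eq_abs]
          exact abs_of_nonneg (Cmat_nonneg Gs P hP0 p q)
      _ ≤ ∑ q, Cmat Gs P p q * (‖v p‖ / pi p.1 * pi q.1) := by
          refine Finset.sum_le_sum fun q _ => ?_
          exact mul_le_mul_of_nonneg_left (hbound q) (Cmat_nonneg Gs P hP0 p q)
      _ = ‖v p‖ / pi p.1 * ∑ q, Cmat Gs P p q * pi q.1 := by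
          rw [Finset.mul_sum]
          exact Finset.sum_congr rfl fun q _ => by ring
      _ ≤ ‖v p‖ / pi p.1 * ((1 - (n : ℝ)⁻¹) * pi p.1) := by
          refine mul_le_mul_of_nonneg_left
            (Cmat_weighted Gs P pi hP0 hpipos hstat p)
            (div_nonneg hvp.le (hpipos p.1).le)
      _ = (1 - (n : ℝ)⁻¹) * ‖v p‖ := by
          have hpi := (hpipos p.1).ne'
          field_simp
  exact le_of_mul_le_mul_right (by simpa [mul_comm] using key) hvp

lemma spectrum_to_eig {M : Matrix (Fin N × Fin n) (Fin N × Fin n) ℝ} {mu : ℂ}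
    (hmu : mu ∈ spectrum ℂ (M.map (algebraMap ℝ ℂ))) :
    ∃ v : Fin N × Fin n → ℂ, v ≠ 0 ∧ (M.map (algebraMap ℝ ℂ)).mulVec v = mu • v := by
  rw [spectrum.mem_iff] at hmu
  rw [Matrix.isUnit_iff_isUnit_det, isUnit_iff_ne_zero, not_not] at hmu
  obtain ⟨v, hv0, hveq⟩ := (Matrix.exists_mulVec_eq_zero_iff).mpr hmu
  refine ⟨v, hv0, ?_⟩
  rw [Algebra.algebraMap_eq_smul_one, Matrix.sub_mulVec, Matrix.smul_mulVec,
    Matrix.one_mulVec, sub_eq_zero] at hveq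
  exact hveq.symm

lemma specRad_lt_one (hPpos : ∀ i j, 0 < P i j) (hpipos : ∀ i, 0 < pi i)
    (hstat : ∀ j, ∑ i, pi i * P i j = pi j) :
    specRad (Cmat Gs P) < 1 := by
  have hP0 : ∀ i j, 0 ≤ P i j := fun i j => (hPpos i j).le
  unfold specRad spectralRadius
  have h1 : (⨆ k ∈ spectrum ℂ ((Cmat Gs P).map (algebraMap ℝ ℂ)), (‖k‖₊ : ℝ≥0∞))
      ≤ ENNReal.ofReal (1 - (n : ℝ)⁻¹) := by
    refine iSup₂_le fun mu hmu => ?_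
    obtain ⟨v, hv0, hveq⟩ := spectrum_to_eig hmu
    have := eig_norm_le Gs P pi hP0 hpipos hstat hv0 hveq
    rw [← enorm_eq_nnnorm, ← ofReal_norm]
    exact ENNReal.ofReal_le_ofReal this
  refine lt_of_le_of_lt h1 ?_
  rw [ENNReal.ofReal_lt_one]
  exact r_lt_one

lemma oneSub_det_isUnit (hPpos : ∀ i j, 0 < P i j) (hpipos : ∀ i, 0 < pi i)
    (hstat : ∀ j, ∑ i, pi i * P i j = pi j) :
    IsUnit (1 - Cmat Gs P).det := by
  have hP0 : ∀ i j, 0 ≤ P i j := fun i j => (hPpos i j).le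
  rw [isUnit_iff_ne_zero]
  intro hdet
  have hdetC : ((1 - Cmat Gs P).map (algebraMap ℝ ℂ)).det = 0 := by
    rw [show (1 - Cmat Gs P).map (algebraMap ℝ ℂ)
        = (algebraMap ℝ ℂ).mapMatrix (1 - Cmat Gs P) from rfl,
      ← RingHom.map_det, hdet, map_zero]
  rw [Matrix.map_sub _ (fun a b => by simp), Matrix.map_one _ (map_zero _) (map_one _)] at hdetC
  obtain ⟨v, hv0, hveq⟩ := (Matrix.exists_mulVec_eq_zero_iff).mpr hdetC
  rw [Matrix.sub_mulVec, Matrix.one_mulVec, sub_eq_zero] at hveq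
  have heig : ((Cmat Gs P).map (algebraMap ℝ ℂ)).mulVec v = (1 : ℂ) • v := by
    rw [one_smul]; exact hveq.symm
  have := eig_norm_le Gs P pi hP0 hpipos hstat hv0 heig
  rw [norm_one] at this
  exact absurd this (not_le.mpr r_lt_one)

lemma traj_congr (s : ℝ) (k : ℕ) (σ τ : ℕ → Fin N) (h : ∀ t < k, σ t = τ t) :
    traj Gs s σ k = traj Gs s τ k := by
  induction k with
  | zero => rfl
  | succ m ih =>
    have h1 : σ m = τ m := h m (Nat.lt_succ_self m)
    have h2 : traj Gs s σ m = traj Gs s τ m := ih fun t ht => h t (ht.trans (Nat.lt_succ_self m))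
    funext u
    show (Jmat (Gs (σ m))).mulVec (traj Gs s σ m) u + _ =
      (Jmat (Gs (τ m))).mulVec (traj Gs s τ m) u + _
    rw [h1, h2]

lemma extFun_snoc_lt {k : ℕ} (σ : Fin k → Fin N) (j : Fin N) (t : ℕ) (ht : t < k) :
    extFun (Fin.snoc σ j) t = extFun σ t := by
  unfold extFun
  rw [dif_pos ht, dif_pos (ht.trans (Nat.lt_succ_self k))]
  have : (⟨t, ht.trans (Nat.lt_succ_self k)⟩ : Fin (k+1)) = Fin.castSucc ⟨t, ht⟩ := rfl
  rw [this, Fin.snoc_castSucc]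

lemma extFun_snoc_last {k : ℕ} (σ : Fin k → Fin N) (j : Fin N) :
    extFun (Fin.snoc σ j) k = j := by
  unfold extFun
  rw [dif_pos (Nat.lt_succ_self k)]
  have : (⟨k, Nat.lt_succ_self k⟩ : Fin (k+1)) = Fin.last k := rfl
  rw [this, Fin.snoc_last]

lemma weight_snoc {m : ℕ} (σ : Fin (m+1) → Fin N) (j : Fin N) :
    weight P pi (m+2) (extFun (Fin.snoc σ j)) =
      weight P pi (m+1) (extFun σ) * P (extFun σ m) j := by
  unfold weight
  have hred : (m + 2 - 1) = m + 1 := rfl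
  have hred2 : (m + 1 - 1) = m := rfl
  rw [hred, hred2, Finset.prod_range_succ]
  rw [extFun_snoc_lt σ j 0 (Nat.succ_pos m)]
  have h1 : ∀ t ∈ Finset.range m, P (extFun (Fin.snoc σ j) t) (extFun (Fin.snoc σ j) (t+1))
      = P (extFun σ t) (extFun σ (t+1)) := by
    intro t ht
    rw [Finset.mem_range] at ht
    rw [extFun_snoc_lt σ j t (ht.trans (Nat.lt_succ_self m)),
      extFun_snoc_lt σ j (t+1) (Nat.succ_lt_succ ht)]
  rw [Finset.prod_congr rfl h1]
  rw [extFun_snoc_lt σ j m (Nat.lt_succ_self m), extFun_snoc_last]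
  ring

lemma sum_snoc {M : Type*} [AddCommMonoid M] {k : ℕ} (f : (Fin (k+1) → Fin N) → M) :
    ∑ τ : Fin (k+1) → Fin N, f τ = ∑ σ : Fin k → Fin N, ∑ j : Fin N, f (Fin.snoc σ j) := by
  rw [← (Fin.insertNthEquiv (fun _ => Fin N) (Fin.last k)).sum_comp]
  rw [Fintype.sum_prod_type]
  rw [Finset.sum_comm]
  refine Finset.sum_congr rfl fun σ _ => Finset.sum_congr rfl fun j _ => ?_
  congr 1
  exact Fin.insertNth_last' j σ

lemma traj_snoc (s : ℝ) {k : ℕ} (σ : Fin k → Fin N) (j : Fin N) (u : Fin n) :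
    traj Gs s (extFun (Fin.snoc σ j)) (k+1) u =
      (Jmat (Gs j)).mulVec (traj Gs s (extFun σ) k) u +
        (if u = 0 then s / (((Gs j).degree 0 : ℝ) + 1) else 0) := by
  show (Jmat (Gs (extFun (Fin.snoc σ j) k))).mulVec (traj Gs s (extFun (Fin.snoc σ j)) k) u + _ = _
  rw [extFun_snoc_last,
    traj_congr Gs s k (extFun (Fin.snoc σ j)) (extFun σ) (fun t ht => extFun_snoc_lt σ j t ht)]

lemma marg (hstat : ∀ j, ∑ i, pi i * P i j = pi j) :
    ∀ m : ℕ, ∀ i : Fin N,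
      ∑ σ : Fin (m+1) → Fin N, weight P pi (m+1) (extFun σ) * P (extFun σ m) i = pi i := by
  intro m
  induction m with
  | zero =>
    intro i
    rw [sum_snoc (fun τ => weight P pi 1 (extFun τ) * P (extFun τ 0) i)]
    rw [Finset.sum_comm]
    have h0 : ∀ j : Fin N, ∀ σ : Fin 0 → Fin N,
        weight P pi 1 (extFun (Fin.snoc σ j)) * P (extFun (Fin.snoc σ j) 0) i
          = pi j * P j i := by
      intro j σ
      unfold weight
      simp only [Nat.sub_self, Finset.range_zero, Finset.prod_empty, mul_one]
      rw [extFun_snoc_last σ j]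
    calc ∑ j : Fin N, ∑ σ : Fin 0 → Fin N,
          weight P pi 1 (extFun (Fin.snoc σ j)) * P (extFun (Fin.snoc σ j) 0) i
        = ∑ j : Fin N, pi j * P j i := by
          refine Finset.sum_congr rfl fun j _ => ?_
          rw [Finset.sum_congr rfl fun σ _ => h0 j σ]
          simp
      _ = pi i := hstat i
  | succ m ih =>
    intro i
    rw [sum_snoc (fun τ => weight P pi (m+2) (extFun τ) * P (extFun τ (m+1)) i)]
    calc ∑ σ : Fin (m+1) → Fin N, ∑ j : Fin N,
          weight P pi (m+2) (extFun (Fin.snoc σ j)) * P (extFun (Fin.snoc σ j) (m+1)) i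
        = ∑ σ : Fin (m+1) → Fin N, ∑ j : Fin N,
            weight P pi (m+1) (extFun σ) * P (extFun σ m) j * P j i := by
          refine Finset.sum_congr rfl fun σ _ => Finset.sum_congr rfl fun j _ => ?_
          rw [weight_snoc, extFun_snoc_last]
      _ = ∑ j : Fin N, (∑ σ : Fin (m+1) → Fin N,
            weight P pi (m+1) (extFun σ) * P (extFun σ m) j) * P j i := by
          rw [Finset.sum_comm]
          exact Finset.sum_congr rfl fun j _ => by rw [Finset.sum_mul]
      _ = ∑ j : Fin N, pi j * P j i := by
          refine Finset.sum_congr rfl fun j _ => ?_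
          rw [ih j]
      _ = pi i := hstat i

/-- auxiliary vector: `z_k(j,u) = ∑_σ w(σ) P(σ_{k-1}, j) x_σ(k)_u`. -/
noncomputable def zVec (Gs : Fin N → SimpleGraph (Fin n)) [∀ i, DecidableRel (Gs i).Adj]
    (P : Matrix (Fin N) (Fin N) ℝ) (pi : Fin N → ℝ) (s : ℝ) (k : ℕ) :
    Fin N × Fin n → ℝ :=
  fun p => ∑ σ : Fin k → Fin N,
    weight P pi k (extFun σ) * P (extFun σ (k-1)) p.1 * traj Gs s (extFun σ) k p.2

lemma zVec_zero (s : ℝ) : zVec Gs P pi s 0 = 0 := by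
  funext p
  unfold zVec
  simp only [Pi.zero_apply]
  refine Finset.sum_eq_zero fun σ _ => ?_
  show _ * (0 : Fin n → ℝ) p.2 = 0
  simp

lemma zVec_one (hstat : ∀ j, ∑ i, pi i * P i j = pi j) (s : ℝ) (p : Fin N × Fin n) :
    zVec Gs P pi s 1 p = psiVec Gs P pi s p := by
  unfold zVec
  rw [sum_snoc (fun τ => weight P pi 1 (extFun τ) * P (extFun τ (1-1)) p.1
    * traj Gs s (extFun τ) 1 p.2)]
  have hterm : ∀ (σ : Fin 0 → Fin N) (j : Fin N),
      weight P pi 1 (extFun (Fin.snoc σ j)) * P (extFun (Fin.snoc σ j) (1-1)) p.1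
        * traj Gs s (extFun (Fin.snoc σ j)) 1 p.2
      = pi j * P j p.1 * (if p.2 = 0 then s / (((Gs j).degree 0 : ℝ) + 1) else 0) := by
    intro σ j
    rw [traj_snoc]
    have h0 : traj Gs s (extFun σ) 0 = 0 := rfl
    rw [h0, Matrix.mulVec_zero]
    simp only [Pi.zero_apply, zero_add]
    unfold weight
    simp only [Nat.sub_self, Finset.range_zero, Finset.prod_empty, mul_one]
    rw [extFun_snoc_last σ j]
  calc ∑ σ : Fin 0 → Fin N, ∑ j : Fin N, weight P pi 1 (extFun (Fin.snoc σ j))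
        * P (extFun (Fin.snoc σ j) (1-1)) p.1 * traj Gs s (extFun (Fin.snoc σ j)) 1 p.2
      = ∑ σ : Fin 0 → Fin N, ∑ j : Fin N,
          pi j * P j p.1 * (if p.2 = 0 then s / (((Gs j).degree 0 : ℝ) + 1) else 0) := by
        exact Finset.sum_congr rfl fun σ _ => Finset.sum_congr rfl fun j _ => hterm σ j
    _ = ∑ j : Fin N,
          pi j * P j p.1 * (if p.2 = 0 then s / (((Gs j).degree 0 : ℝ) + 1) else 0) := by
        rw [Fintype.sum_unique (fun _ : Fin 0 → Fin N => _)]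
    _ = psiVec Gs P pi s p := by
        unfold psiVec
        by_cases h : p.2 = 0
        · simp only [if_pos h]
          exact Finset.sum_congr rfl fun j _ => by ring
        · simp only [if_neg h, mul_zero]
          exact Finset.sum_eq_zero fun j _ => rfl

lemma zVec_succ_succ (hstat : ∀ j, ∑ i, pi i * P i j = pi j) (s : ℝ) (m : ℕ)
    (p : Fin N × Fin n) :
    zVec Gs P pi s (m+2) p =
      (Cmat Gs P).mulVec (zVec Gs P pi s (m+1)) p + psiVec Gs P pi s p := by
  have hsplit : zVec Gs P pi s (m+2) p
      = (∑ σ : Fin (m+1) → Fin N, ∑ j : Fin N,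
          weight P pi (m+1) (extFun σ) * P (extFun σ m) j * P j p.1 *
            ((Jmat (Gs j)).mulVec (traj Gs s (extFun σ) (m+1)) p.2))
        + ∑ σ : Fin (m+1) → Fin N, ∑ j : Fin N,
          weight P pi (m+1) (extFun σ) * P (extFun σ m) j * P j p.1 *
            (if p.2 = 0 then s / (((Gs j).degree 0 : ℝ) + 1) else 0) := by
    unfold zVec
    rw [sum_snoc (fun τ => weight P pi (m+2) (extFun τ) * P (extFun τ (m+2-1)) p.1
      * traj Gs s (extFun τ) (m+2) p.2)]
    rw [← Finset.sum_add_distrib]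
    refine Finset.sum_congr rfl fun σ _ => ?_
    rw [← Finset.sum_add_distrib]
    refine Finset.sum_congr rfl fun j _ => ?_
    have hred : (m + 2 - 1) = m + 1 := rfl
    rw [hred, weight_snoc, extFun_snoc_last, traj_snoc]
    ring
  rw [hsplit]
  congr 1
  · -- the C · z part
    have hz : ∀ j v, zVec Gs P pi s (m+1) (j, v)
        = ∑ σ : Fin (m+1) → Fin N,
            weight P pi (m+1) (extFun σ) * P (extFun σ m) j * traj Gs s (extFun σ) (m+1) v := fun j v => rfl
    rw [Finset.sum_comm]
    show _ = (Cmat Gs P).mulVec (zVec Gs P pi s (m+1)) p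
    rw [Matrix.mulVec]
    show _ = ∑ q, Cmat Gs P p q * zVec Gs P pi s (m+1) q
    rw [Fintype.sum_prod_type]
    refine Finset.sum_congr rfl fun j _ => ?_
    calc ∑ σ : Fin (m+1) → Fin N,
          weight P pi (m+1) (extFun σ) * P (extFun σ m) j * P j p.1 *
            ((Jmat (Gs j)).mulVec (traj Gs s (extFun σ) (m+1)) p.2)
        = ∑ σ : Fin (m+1) → Fin N, ∑ v : Fin n,
            weight P pi (m+1) (extFun σ) * P (extFun σ m) j * P j p.1 *
              (Jmat (Gs j) p.2 v * traj Gs s (extFun σ) (m+1) v) := by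
          refine Finset.sum_congr rfl fun σ _ => ?_
          rw [Matrix.mulVec]
          show _ * ∑ v, Jmat (Gs j) p.2 v * traj Gs s (extFun σ) (m+1) v = _
          rw [Finset.mul_sum]
      _ = ∑ v : Fin n, ∑ σ : Fin (m+1) → Fin N,
            weight P pi (m+1) (extFun σ) * P (extFun σ m) j * P j p.1 *
              (Jmat (Gs j) p.2 v * traj Gs s (extFun σ) (m+1) v) := Finset.sum_comm
      _ = ∑ v : Fin n, Cmat Gs P p (j, v) * zVec Gs P pi s (m+1) (j, v) := by
          refine Finset.sum_congr rfl fun v _ => ?_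
          rw [Cmat_apply, hz, Finset.mul_sum]
          exact Finset.sum_congr rfl fun σ _ => by ring
  · -- the ψ part
    rw [Finset.sum_comm]
    calc ∑ j : Fin N, ∑ σ : Fin (m+1) → Fin N,
          weight P pi (m+1) (extFun σ) * P (extFun σ m) j * P j p.1 *
            (if p.2 = 0 then s / (((Gs j).degree 0 : ℝ) + 1) else 0)
        = ∑ j : Fin N, (P j p.1 * (if p.2 = 0 then s / (((Gs j).degree 0 : ℝ) + 1) else 0))
            * ∑ σ : Fin (m+1) → Fin N,
              weight P pi (m+1) (extFun σ) * P (extFun σ m) j := by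
          refine Finset.sum_congr rfl fun j _ => ?_
          rw [Finset.mul_sum]
          exact Finset.sum_congr rfl fun σ _ => by ring
      _ = ∑ j : Fin N, P j p.1 * (if p.2 = 0 then s / (((Gs j).degree 0 : ℝ) + 1) else 0)
            * pi j := by
          refine Finset.sum_congr rfl fun j _ => ?_
          rw [marg P pi hstat m j]
      _ = psiVec Gs P pi s p := by
          unfold psiVec
          by_cases h : p.2 = 0
          · simp only [if_pos h]
            exact Finset.sum_congr rfl fun j _ => by ring
          · simp only [if_neg h, mul_zero, zero_mul]
            exact Finset.sum_eq_zero fun j _ => rfl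

lemma zVec_succ (hstat : ∀ j, ∑ i, pi i * P i j = pi j) (s : ℝ) (k : ℕ)
    (p : Fin N × Fin n) :
    zVec Gs P pi s (k+1) p =
      (Cmat Gs P).mulVec (zVec Gs P pi s k) p + psiVec Gs P pi s p := by
  cases k with
  | zero =>
    rw [zVec_one Gs P pi hstat s p, zVec_zero, Matrix.mulVec_zero]
    simp
  | succ m => exact zVec_succ_succ Gs P pi hstat s m p

lemma expState_apply (s : ℝ) (k : ℕ) (u : Fin n) :
    expState Gs P pi s k u
      = ∑ σ : Fin k → Fin N, weight P pi k (extFun σ) * traj Gs s (extFun σ) k u := by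
  unfold expState
  rw [Finset.sum_apply]
  exact Finset.sum_congr rfl fun σ _ => rfl

lemma expState_formula (hstat : ∀ j, ∑ i, pi i * P i j = pi j) (s : ℝ) (m : ℕ) (u : Fin n) :
    expState Gs P pi s (m+2) u =
      (∑ j, (Jmat (Gs j)).mulVec (fun v => zVec Gs P pi s (m+1) (j, v)) u)
        + (if u = 0 then ∑ j, pi j * (s / (((Gs j).degree 0 : ℝ) + 1)) else 0) := by
  rw [expState_apply]
  rw [sum_snoc (fun τ => weight P pi (m+2) (extFun τ) * traj Gs s (extFun τ) (m+2) u)]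
  have hsplit : ∑ σ : Fin (m+1) → Fin N, ∑ j : Fin N,
        weight P pi (m+2) (extFun (Fin.snoc σ j)) * traj Gs s (extFun (Fin.snoc σ j)) (m+2) u
      = (∑ σ : Fin (m+1) → Fin N, ∑ j : Fin N,
          weight P pi (m+1) (extFun σ) * P (extFun σ m) j *
            ((Jmat (Gs j)).mulVec (traj Gs s (extFun σ) (m+1)) u))
        + ∑ σ : Fin (m+1) → Fin N, ∑ j : Fin N,
          weight P pi (m+1) (extFun σ) * P (extFun σ m) j *
            (if u = 0 then s / (((Gs j).degree 0 : ℝ) + 1) else 0) := by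
    rw [← Finset.sum_add_distrib]
    refine Finset.sum_congr rfl fun σ _ => ?_
    rw [← Finset.sum_add_distrib]
    refine Finset.sum_congr rfl fun j _ => ?_
    rw [weight_snoc, traj_snoc]
    ring
  rw [hsplit]
  congr 1
  · rw [Finset.sum_comm]
    refine Finset.sum_congr rfl fun j _ => ?_
    have hz : ∀ v, zVec Gs P pi s (m+1) (j, v)
        = ∑ σ : Fin (m+1) → Fin N,
            weight P pi (m+1) (extFun σ) * P (extFun σ m) j * traj Gs s (extFun σ) (m+1) v :=
      fun v => rfl
    calc ∑ σ : Fin (m+1) → Fin N,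
          weight P pi (m+1) (extFun σ) * P (extFun σ m) j *
            ((Jmat (Gs j)).mulVec (traj Gs s (extFun σ) (m+1)) u)
        = ∑ σ : Fin (m+1) → Fin N, ∑ v : Fin n,
            weight P pi (m+1) (extFun σ) * P (extFun σ m) j *
              (Jmat (Gs j) u v * traj Gs s (extFun σ) (m+1) v) := by
          refine Finset.sum_congr rfl fun σ _ => ?_
          rw [Matrix.mulVec]
          show _ * ∑ v, Jmat (Gs j) u v * traj Gs s (extFun σ) (m+1) v = _
          rw [Finset.mul_sum]
      _ = ∑ v : Fin n, ∑ σ : Fin (m+1) → Fin N,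
            weight P pi (m+1) (extFun σ) * P (extFun σ m) j *
              (Jmat (Gs j) u v * traj Gs s (extFun σ) (m+1) v) := Finset.sum_comm
      _ = (Jmat (Gs j)).mulVec (fun v => zVec Gs P pi s (m+1) (j, v)) u := by
          rw [Matrix.mulVec]
          show _ = ∑ v, Jmat (Gs j) u v * zVec Gs P pi s (m+1) (j, v)
          refine Finset.sum_congr rfl fun v _ => ?_
          rw [hz, Finset.mul_sum]
          exact Finset.sum_congr rfl fun σ _ => by ring
  · rw [Finset.sum_comm]
    calc ∑ j : Fin N, ∑ σ : Fin (m+1) → Fin N,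
          weight P pi (m+1) (extFun σ) * P (extFun σ m) j *
            (if u = 0 then s / (((Gs j).degree 0 : ℝ) + 1) else 0)
        = ∑ j : Fin N, (if u = 0 then s / (((Gs j).degree 0 : ℝ) + 1) else 0)
            * ∑ σ : Fin (m+1) → Fin N, weight P pi (m+1) (extFun σ) * P (extFun σ m) j := by
          refine Finset.sum_congr rfl fun j _ => ?_
          rw [Finset.mul_sum]
          exact Finset.sum_congr rfl fun σ _ => by ring
      _ = ∑ j : Fin N, (if u = 0 then s / (((Gs j).degree 0 : ℝ) + 1) else 0) * pi j := by
          refine Finset.sum_congr rfl fun j _ => ?_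
          rw [marg P pi hstat m j]
      _ = (if u = 0 then ∑ j, pi j * (s / (((Gs j).degree 0 : ℝ) + 1)) else 0) := by
          by_cases h : u = 0
          · simp only [if_pos h]
            exact Finset.sum_congr rfl fun j _ => by ring
          · simp only [if_neg h, zero_mul]
            exact Finset.sum_eq_zero fun j _ => rfl

lemma mulVec_apply' {α β : Type*} [Fintype β] (M : Matrix α β ℝ) (x : β → ℝ) (u : α) :
    M.mulVec x u = ∑ v, M u v * x v := rfl

lemma mulVec_bound (hP0 : ∀ i j, 0 ≤ P i j) (hpipos : ∀ i, 0 < pi i)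
    (hstat : ∀ j, ∑ i, pi i * P i j = pi j) (x : Fin N × Fin n → ℝ) (c : ℝ) (hc : 0 ≤ c)
    (hx : ∀ q, |x q| ≤ c * pi q.1) (p : Fin N × Fin n) :
    |(Cmat Gs P).mulVec x p| ≤ (1 - (n:ℝ)⁻¹) * c * pi p.1 := by
  have h1 : |(Cmat Gs P).mulVec x p| ≤ ∑ q, Cmat Gs P p q * |x q| := by
    rw [Matrix.mulVec]
    refine le_trans (Finset.abs_sum_le_sum_abs _ _) ?_
    refine Finset.sum_le_sum fun q _ => ?_
    rw [abs_mul, abs_of_nonneg (Cmat_nonneg Gs P hP0 p q)]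
  refine le_trans h1 ?_
  calc ∑ q, Cmat Gs P p q * |x q|
      ≤ ∑ q, Cmat Gs P p q * (c * pi q.1) := by
        refine Finset.sum_le_sum fun q _ => ?_
        exact mul_le_mul_of_nonneg_left (hx q) (Cmat_nonneg Gs P hP0 p q)
    _ = c * ∑ q, Cmat Gs P p q * pi q.1 := by
        rw [Finset.mul_sum]
        exact Finset.sum_congr rfl fun q _ => by ring
    _ ≤ c * ((1 - (n:ℝ)⁻¹) * pi p.1) :=
        mul_le_mul_of_nonneg_left (Cmat_weighted Gs P pi hP0 hpipos hstat p) hc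
    _ = (1 - (n:ℝ)⁻¹) * c * pi p.1 := by ring

set_option maxHeartbeats 1000000 in
/-- For an entrywise positive row-stochastic `P` with stationary distribution `π` and `s > 0`:
`ρ(C) < 1`, and the expected DSSD state `m(k)` converges, as `k → ∞`, to
`μ := ∑_{i=1}^N q^{(i)}` where `q := (I − C)⁻¹ ψ`. -/
theorem expected_dssd_state_tendsto {N n : ℕ} [NeZero N] [NeZero n]
    (Gs : Fin N → SimpleGraph (Fin n)) [∀ i, DecidableRel (Gs i).Adj]
    (P : Matrix (Fin N) (Fin N) ℝ)
    (hPpos : ∀ i j, 0 < P i j) (hProw : ∀ i, ∑ j, P i j = 1)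
    (pi : Fin N → ℝ) (hpipos : ∀ i, 0 < pi i) (hpisum : ∑ i, pi i = 1)
    (hstat : ∀ j, ∑ i, pi i * P i j = pi j)
    (s : ℝ) (hs : 0 < s) :
    specRad (Cmat Gs P) < 1 ∧
      Tendsto (fun k => expState Gs P pi s k) atTop
        (𝓝 (fun u => ∑ i : Fin N,
          ((1 - Cmat Gs P)⁻¹).mulVec (psiVec Gs P pi s) (i, u))) := by
  have hP0 : ∀ i j, 0 ≤ P i j := fun i j => (hPpos i j).le
  set r : ℝ := 1 - (n:ℝ)⁻¹ with hr
  have hr0 : (0:ℝ) ≤ r := r_nonneg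
  have hr1 : r < 1 := r_lt_one
  set q : Fin N × Fin n → ℝ := ((1 - Cmat Gs P)⁻¹).mulVec (psiVec Gs P pi s) with hq
  have hunit : IsUnit (1 - Cmat Gs P).det := oneSub_det_isUnit Gs P pi hPpos hpipos hstat
  -- fixed point equation for q
  have hfix : q = (Cmat Gs P).mulVec q + psiVec Gs P pi s := by
    have h1 : (1 - Cmat Gs P) * (1 - Cmat Gs P)⁻¹ = 1 := Matrix.mul_nonsing_inv _ hunit
    have h2 : (1 - Cmat Gs P).mulVec q = psiVec Gs P pi s := by
      rw [hq, Matrix.mulVec_mulVec, h1, Matrix.one_mulVec]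
    rw [Matrix.sub_mulVec, Matrix.one_mulVec] at h2
    funext p
    have := congrFun h2 p
    simp only [Pi.sub_apply] at this
    simp only [Pi.add_apply]
    linarith
  -- bound on q
  set c : ℝ := ∑ p, |q p| / pi p.1 with hc
  have hc0 : 0 ≤ c := Finset.sum_nonneg fun p _ => div_nonneg (abs_nonneg _) (hpipos p.1).le
  have hqb : ∀ p, |q p| ≤ c * pi p.1 := by
    intro p
    have h1 : |q p| / pi p.1 ≤ c :=
      Finset.single_le_sum (fun p' _ => div_nonneg (abs_nonneg _) (hpipos p'.1).le)
        (Finset.mem_univ p)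
    calc |q p| = |q p| / pi p.1 * pi p.1 := (div_mul_cancel₀ _ (hpipos p.1).ne').symm
      _ ≤ c * pi p.1 := mul_le_mul_of_nonneg_right h1 (hpipos p.1).le
  -- error bound
  have herr : ∀ k p, |zVec Gs P pi s k p - q p| ≤ r ^ k * c * pi p.1 := by
    intro k
    induction k with
    | zero =>
      intro p
      rw [zVec_zero, Pi.zero_apply, zero_sub, abs_neg, pow_zero, one_mul]
      exact hqb p
    | succ m ih =>
      intro p
      have hrec : zVec Gs P pi s (m+1) p - q p
          = (Cmat Gs P).mulVec (fun p' => zVec Gs P pi s m p' - q p') p := by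
        rw [zVec_succ Gs P pi hstat s m p]
        have := congrFun hfix p
        simp only [Pi.add_apply] at this
        rw [this]
        have : (Cmat Gs P).mulVec (fun p' => zVec Gs P pi s m p' - q p') p
            = (Cmat Gs P).mulVec (zVec Gs P pi s m) p - (Cmat Gs P).mulVec q p := by
          have h3 := Matrix.mulVec_sub (Cmat Gs P) (zVec Gs P pi s m) q
          have := congrFun h3 p
          simp only [Pi.sub_apply] at this
          rw [← this]
          rfl
        rw [this]
        ring
      rw [hrec]
      have hb := mulVec_bound Gs P pi hP0 hpipos hstat
        (fun p' => zVec Gs P pi s m p' - q p') (r ^ m * c)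
        (mul_nonneg (pow_nonneg hr0 m) hc0) (fun p' => ih p') p
      calc |(Cmat Gs P).mulVec (fun p' => zVec Gs P pi s m p' - q p') p|
          ≤ r * (r ^ m * c) * pi p.1 := hb
        _ = r ^ (m+1) * c * pi p.1 := by ring
  -- coordinatewise convergence of zVec to q
  have hz : ∀ p, Tendsto (fun k => zVec Gs P pi s k p) atTop (𝓝 (q p)) := by
    intro p
    rw [← tendsto_sub_nhds_zero_iff]
    have hnorm : ∀ k, ‖zVec Gs P pi s k p - q p‖ ≤ r ^ k * c * pi p.1 := by
      intro k
      rw [Real.norm_eq_abs]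
      exact herr k p
    refine squeeze_zero_norm hnorm ?_
    · have h1 : Tendsto (fun k : ℕ => r ^ k) atTop (𝓝 0) :=
        tendsto_pow_atTop_nhds_zero_of_lt_one hr0 hr1
      have h2 : Tendsto (fun k : ℕ => r ^ k * c * pi p.1) atTop (𝓝 (0 * c * pi p.1)) :=
        (h1.mul_const c).mul_const (pi p.1)
      simpa using h2
  refine ⟨specRad_lt_one Gs P pi hPpos hpipos hstat, ?_⟩
  rw [tendsto_pi_nhds]
  intro u
  set cst : ℝ := if u = 0 then ∑ j, pi j * (s / (((Gs j).degree 0 : ℝ) + 1)) else 0 with hcst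
  -- the limit identity
  have hlim : ∑ i : Fin N, q (i, u) = (∑ j, ∑ v, Jmat (Gs j) u v * q (j, v)) + cst := by
    have h1 : ∀ i : Fin N, q (i, u)
        = (Cmat Gs P).mulVec q (i, u) + psiVec Gs P pi s (i, u) := by
      intro i
      have := congrFun hfix (i, u)
      simpa using this
    rw [Finset.sum_congr rfl fun i _ => h1 i, Finset.sum_add_distrib]
    congr 1
    · -- ∑ i (Cq)(i,u) = ∑ j ∑ v J q
      calc ∑ i : Fin N, (Cmat Gs P).mulVec q (i, u)
          = ∑ i : Fin N, ∑ j, ∑ v, P j i * Jmat (Gs j) u v * q (j, v) := by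
            refine Finset.sum_congr rfl fun i _ => ?_
            rw [Matrix.mulVec]
            show ∑ p', Cmat Gs P (i, u) p' * q p' = _
            rw [Fintype.sum_prod_type]
            exact Finset.sum_congr rfl fun j _ => Finset.sum_congr rfl fun v _ => by
              rw [Cmat_apply]
        _ = ∑ j, ∑ v, (∑ i : Fin N, P j i) * (Jmat (Gs j) u v * q (j, v)) := by
            rw [Finset.sum_comm]
            refine Finset.sum_congr rfl fun j _ => ?_
            rw [Finset.sum_comm]
            refine Finset.sum_congr rfl fun v _ => ?_
            rw [Finset.sum_mul]
            exact Finset.sum_congr rfl fun i _ => by ring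
        _ = ∑ j, ∑ v, Jmat (Gs j) u v * q (j, v) := by
            refine Finset.sum_congr rfl fun j _ => Finset.sum_congr rfl fun v _ => ?_
            rw [hProw j, one_mul]
    · -- ∑ i ψ(i,u) = cst
      unfold psiVec
      by_cases h : u = 0
      · simp only [if_pos h, hcst]
        rw [Finset.sum_comm]
        refine Finset.sum_congr rfl fun j _ => ?_
        calc ∑ i : Fin N, P j i * pi j * s / (((Gs j).degree 0 : ℝ) + 1)
            = (∑ i : Fin N, P j i) * (pi j * (s / (((Gs j).degree 0 : ℝ) + 1))) := by
              rw [Finset.sum_mul]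
              exact Finset.sum_congr rfl fun i _ => by ring
          _ = pi j * (s / (((Gs j).degree 0 : ℝ) + 1)) := by rw [hProw j, one_mul]
      · rw [hcst, if_neg h]
        exact Finset.sum_eq_zero fun x _ => if_neg h
  -- convergence of the shifted sequence
  have hshift : Tendsto (fun m => expState Gs P pi s (m+2) u) atTop
      (𝓝 (∑ i : Fin N, q (i, u))) := by
    have hform : ∀ m, expState Gs P pi s (m+2) u
        = (∑ j, ∑ v, Jmat (Gs j) u v * zVec Gs P pi s (m+1) (j, v)) + cst := by
      intro m
      rw [expState_formula Gs P pi hstat s m u]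
      congr 1
    have hT : Tendsto
        (fun m => (∑ j, ∑ v, Jmat (Gs j) u v * zVec Gs P pi s (m+1) (j, v)) + cst) atTop
        (𝓝 ((∑ j, ∑ v, Jmat (Gs j) u v * q (j, v)) + cst)) := by
      refine Tendsto.add ?_ tendsto_const_nhds
      refine tendsto_finset_sum _ fun j _ => tendsto_finset_sum _ fun v _ => ?_
      refine Tendsto.const_mul _ ?_
      exact (tendsto_add_atTop_iff_nat 1).mpr (hz (j, v))
    rw [← hlim] at hT
    exact Tendsto.congr (fun m => (hform m).symm) hT
  exact (tendsto_add_atTop_iff_nat 2).mp hshift
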